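/- For every tree t in a set of trees T, the number of distinct contexts c with |c| = n such that t = c[s] for some tree s is at most n+1. -/

import Mathlib

/-- Labelled binary trees over an alphabet `A`. -/
inductive BTree (A : Type*) : Type _
  | leaf : A → BTree A
  | node : A → BTree A → BTree A → BTree A

/-- The number of leaves of a labelled binary tree. -/
def BTree.numLeaves {A : Type*} : BTree A → ℕ
  | .leaf _ => 1
  | .node _ l r => l.numLeaves + r.numLeaves

/-- Contexts over `A`: labelled binary trees with exactly one distinguished
parameter leaf `x`.  `Ctx.left a c t` denotes `a(c, t)` (parameter in the left
subtree), `Ctx.right a t c` denotes `a(t, c)`. -/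
inductive Ctx (A : Type*) : Type _
  | hole : Ctx A
  | left : A → Ctx A → BTree A → Ctx A
  | right : A → BTree A → Ctx A → Ctx A

/-- The size of a context: its number of leaves, not counting the parameter. -/
def Ctx.size {A : Type*} : Ctx A → ℕ
  | .hole => 0
  | .left _ c t => c.size + t.numLeaves
  | .right _ t c => t.numLeaves + c.size

/-- `c[s]`: the tree obtained from the context `c` by replacing the parameter
leaf by the tree `s`. -/
def Ctx.subst {A : Type*} : Ctx A → BTree A → BTree A
  | .hole, s => s
  | .left a c t, s => .node a (c.subst s) t
  | .right a t c, s => .node a t (c.subst s)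

/-!
Count contexts by the number `m` of leaves of the argument `s` rather than by their size
`|t| - m`. Then no subtraction enters the recursion: for `t = a(l, r)` and `m < |t|` every such
context lies inside `l` or inside `r`, so the count is at most
`(|l| + 1 - m) + (|r| + 1 - m) ≤ |t| + 1 - m` by induction, using `m ≥ 1`.
-/

namespace BTree

variable {A : Type*}

lemma one_le_numLeaves (t : BTree A) : 1 ≤ t.numLeaves := by
  induction t with
  | leaf => simp [numLeaves]
  | node _ _ _ ihl _ => simp only [numLeaves]; omega

end BTree

namespace Ctx

variable {A : Type*}

lemma numLeaves_subst (c : Ctx A) (s : BTree A) :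
    (c.subst s).numLeaves = c.size + s.numLeaves := by
  induction c with
  | hole => simp [subst, size]
  | left _ _ _ ih => simp only [subst, size, BTree.numLeaves, ih]; omega
  | right _ _ _ ih => simp only [subst, size, BTree.numLeaves, ih]; omega

lemma eq_hole_of_size_eq_zero {c : Ctx A} (h : c.size = 0) : c = hole := by
  cases c with
  | hole => rfl
  | left _ _ t => have := t.one_le_numLeaves; simp only [size] at h; omega
  | right _ t _ => have := t.one_le_numLeaves; simp only [size] at h; omega

lemma left_injective (a : A) (r : BTree A) : Function.Injective (fun c => left a c r) :=
  fun _ _ h => (left.inj h).2.1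

lemma right_injective (a : A) (l : BTree A) : Function.Injective (fun c => right a l c) :=
  fun _ _ h => (right.inj h).2.2

def decompositions (t : BTree A) (m : ℕ) : Set (Ctx A) :=
  {c | ∃ s : BTree A, s.numLeaves = m ∧ c.subst s = t}

lemma decompositions_zero (t : BTree A) : decompositions t 0 = ∅ :=
  Set.eq_empty_iff_forall_notMem.2 fun _ ⟨s, hs, _⟩ => by
    have := s.one_le_numLeaves
    omega

lemma decompositions_of_numLeaves_lt {t : BTree A} {m : ℕ} (h : t.numLeaves < m) :
    decompositions t m = ∅ :=
  Set.eq_empty_iff_forall_notMem.2 fun c ⟨s, hs, hc⟩ => by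
    rw [← hc, numLeaves_subst] at h
    omega

lemma decompositions_numLeaves (t : BTree A) : decompositions t t.numLeaves = {hole} := by
  ext c
  simp only [decompositions, Set.mem_ofPred_eq, Set.mem_singleton_iff]
  constructor
  · rintro ⟨s, hs, rfl⟩
    rw [numLeaves_subst] at hs
    exact eq_hole_of_size_eq_zero (by omega)
  · rintro rfl
    exact ⟨t, rfl, rfl⟩

lemma decompositions_node {a : A} {l r : BTree A} {m : ℕ}
    (h : m < (BTree.node a l r).numLeaves) :
    decompositions (.node a l r) m =
      (fun c => left a c r) '' decompositions l m ∪
        (fun c => right a l c) '' decompositions r m := by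
  ext c
  constructor
  · rintro ⟨s, rfl, hc⟩
    cases c with
    | hole => rw [subst] at hc; subst hc; omega
    | left b c t =>
      obtain ⟨rfl, hl, rfl⟩ := BTree.node.inj hc
      exact .inl ⟨c, ⟨s, rfl, hl⟩, rfl⟩
    | right b t c =>
      obtain ⟨rfl, rfl, hr⟩ := BTree.node.inj hc
      exact .inr ⟨c, ⟨s, rfl, hr⟩, rfl⟩
  · rintro (⟨c, ⟨s, hs, rfl⟩, rfl⟩ | ⟨c, ⟨s, hs, rfl⟩, rfl⟩)
    · exact ⟨s, hs, rfl⟩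
    · exact ⟨s, hs, rfl⟩

lemma ncard_decompositions_le_of_numLeaves_le {t : BTree A} {m : ℕ} (h : t.numLeaves ≤ m) :
    (decompositions t m).ncard ≤ t.numLeaves + 1 - m := by
  rcases h.eq_or_lt with rfl | hlt
  · simp [decompositions_numLeaves]
  · simp [decompositions_of_numLeaves_lt hlt]

theorem ncard_decompositions_le {m : ℕ} (hm : 0 < m) (t : BTree A) :
    (decompositions t m).ncard ≤ t.numLeaves + 1 - m := by
  induction t with
  | leaf => exact ncard_decompositions_le_of_numLeaves_le hm
  | node a l r ihl ihr =>
    rcases lt_or_ge m (BTree.node a l r).numLeaves with h | h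
    · calc (decompositions (.node a l r) m).ncard
          ≤ ((fun c => left a c r) '' decompositions l m).ncard +
              ((fun c => right a l c) '' decompositions r m).ncard := by
            rw [decompositions_node h]
            exact Set.ncard_union_le _ _
        _ = (decompositions l m).ncard + (decompositions r m).ncard := by
            rw [Set.ncard_image_of_injective _ (left_injective a r),
              Set.ncard_image_of_injective _ (right_injective a l)]
        _ ≤ (l.numLeaves + 1 - m) + (r.numLeaves + 1 - m) := add_le_add ihl ihr
        _ ≤ (BTree.node a l r).numLeaves + 1 - m := by simp only [BTree.numLeaves]; omega
    · exact ncard_decompositions_le_of_numLeaves_le h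

-- For `n ≥ |t|` the truncated `|t| - n` is `0` and both sides are empty.
lemma setOf_size_eq_and_subst_eq (t : BTree A) (n : ℕ) :
    {c : Ctx A | c.size = n ∧ ∃ s, c.subst s = t} = decompositions t (t.numLeaves - n) := by
  ext c
  constructor
  · rintro ⟨rfl, s, rfl⟩
    exact ⟨s, by rw [numLeaves_subst]; omega, rfl⟩
  · rintro ⟨s, hs, rfl⟩
    rw [numLeaves_subst] at hs
    have := s.one_le_numLeaves
    exact ⟨by omega, s, rfl⟩

end Ctx

/-- For every tree `t`, the number of distinct contexts `c` with `|c| = n` such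
that `t = c[s]` for some tree `s` is at most `n + 1`. -/
theorem card_contexts_le {A : Type*} (t : BTree A) (n : ℕ) :
    {c : Ctx A | c.size = n ∧ ∃ s, c.subst s = t}.ncard ≤ n + 1 := by
  rw [Ctx.setOf_size_eq_and_subst_eq]
  rcases Nat.eq_zero_or_pos (t.numLeaves - n) with h | h
  · simp [h, Ctx.decompositions_zero]
  · have := Ctx.ncard_decompositions_le h t
    omega
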